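/- For all L ≥ 0, c ≥ 1, q ≥ 1, d ≥ 0 and every pointed d-featured graph (G₁, v₁), there exists a d-dimensional GML^∃ formula γ such that for every pointed d-featured graph (G₂, v₂): G₂, v₂ ⊨ γ if and only if G₁, v₁ ∼^{L,c,q}_∃ G₂, v₂. -/

import Mathlib

/-- A `d`-featured directed graph: finite nonempty vertex set, edge relation,
and a feature map into `{0,1}^d` (represented as `Fin d → Bool`). -/
structure FGraph (d : ℕ) where
  V : Type
  [fintypeV : Fintype V]
  nonemptyV : Nonempty V
  E : V → V → Prop
  f : V → Fin d → Bool

attribute [instance] FGraph.fintypeV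

/-- `c`-graded `L`-turn bisimilarity between pointed `d`-featured graphs. -/
def bisim (d c : ℕ) : (L : ℕ) → (G₁ G₂ : FGraph d) → G₁.V → G₂.V → Prop
  | 0, G₁, G₂, v₁, v₂ => G₁.f v₁ = G₂.f v₂
  | L + 1, G₁, G₂, v₁, v₂ =>
      G₁.f v₁ = G₂.f v₂ ∧
      (∀ k, k ≤ c → ∀ u₁ : Fin k → G₁.V, Function.Injective u₁ →
        (∀ i, G₁.E v₁ (u₁ i)) →
        ∃ u₂ : Fin k → G₂.V, Function.Injective u₂ ∧ (∀ i, G₂.E v₂ (u₂ i)) ∧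
          ∀ i, bisim d c L G₁ G₂ (u₁ i) (u₂ i)) ∧
      (∀ k, k ≤ c → ∀ u₂ : Fin k → G₂.V, Function.Injective u₂ →
        (∀ i, G₂.E v₂ (u₂ i)) →
        ∃ u₁ : Fin k → G₁.V, Function.Injective u₁ ∧ (∀ i, G₁.E v₁ (u₁ i)) ∧
          ∀ i, bisim d c L G₁ G₂ (u₁ i) (u₂ i))

/-- `∼^{L,c,*}_∃` : `c`-graded `L`-turn bisimilarity with (unbounded) global counting. -/
def bisimStar (d c L : ℕ) (G₁ G₂ : FGraph d) (v₁ : G₁.V) (v₂ : G₂.V) : Prop :=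
  bisim d c L G₁ G₂ v₁ v₂ ∧
  (∀ u : G₁.V,
    Set.ncard {u₁ : G₁.V | bisim d c L G₁ G₁ u₁ u} =
      Set.ncard {u₂ : G₂.V | bisim d c L G₂ G₁ u₂ u}) ∧
  (∀ u : G₂.V,
    Set.ncard {u₁ : G₁.V | bisim d c L G₁ G₂ u₁ u} =
      Set.ncard {u₂ : G₂.V | bisim d c L G₂ G₂ u₂ u})

/-- `∼^{L,c,q}_∃` : `c`-graded `L`-turn bisimilarity with global counting bounded by `q`. -/
def bisimQ (d c L q : ℕ) (G₁ G₂ : FGraph d) (v₁ : G₁.V) (v₂ : G₂.V) : Prop :=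
  bisim d c L G₁ G₂ v₁ v₂ ∧
  (∀ u : G₁.V,
    min (Set.ncard {u₁ : G₁.V | bisim d c L G₁ G₁ u₁ u}) q =
      min (Set.ncard {u₂ : G₂.V | bisim d c L G₂ G₁ u₂ u}) q) ∧
  (∀ u : G₂.V,
    min (Set.ncard {u₁ : G₁.V | bisim d c L G₁ G₂ u₁ u}) q =
      min (Set.ncard {u₂ : G₂.V | bisim d c L G₂ G₂ u₂ u}) q)
/-- Formulas of `d`-dimensional graded modal logic with graded global
(counting) modalities, `GML^∃`. -/
inductive GML (d : ℕ) : Type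
  | top : GML d
  | prop : Fin d → GML d
  | not : GML d → GML d
  | and : GML d → GML d → GML d
  | dia : ℕ → GML d → GML d
  | ex : ℕ → GML d → GML d

/-- Satisfaction of a `GML^∃` formula at a vertex of a `d`-featured graph. -/
def GMLSat {d : ℕ} (G : FGraph d) : GML d → G.V → Prop
  | .top, _ => True
  | .prop i, v => G.f v i = true
  | .not φ, v => ¬ GMLSat G φ v
  | .and φ ψ, v => GMLSat G φ v ∧ GMLSat G ψ v
  | .dia k φ, v => k ≤ Set.ncard {u : G.V | G.E v u ∧ GMLSat G φ u}
  | .ex k φ, _ => k ≤ Set.ncard {u : G.V | GMLSat G φ u}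

/-!
`∼^{L,c}` is an equivalence relation across graphs, so the forth and back conditions of one
more round can be checked class by class: matching within each class shows that
`∼^{L+1,c}` means equal features and, for every `∼^{L,c}`-class, the same number of
out-neighbours in it, capped at `c`. Such a capped count is expressed by
`◇_{≥n} χ ∧ ¬◇_{≥n+1} χ` (or `◇_{≥c} χ`), given a formula `χ` defining the class, and
`¬◇_{≥1} ¬⋁ χ` excludes out-neighbours in classes missing on the left; induction on `L`
yields characteristic formulas for `∼^{L,c}`. The global counting of `∼^{L,c,q}_∃` is the
same condition with `∃_{≥k}` and all vertices in place of `◇_{≥k}` and out-neighbours.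
-/

open Function

section Counting

variable {α β γ : Type*}

lemma nonempty_embedding_of_natCard_le [Finite α] [Finite β] (h : Nat.card α ≤ Nat.card β) :
    Nonempty (α ↪ β) := by
  have := Fintype.ofFinite α
  have := Fintype.ofFinite β
  exact Embedding.nonempty_of_card_le (by simpa [Nat.card_eq_fintype_card] using h)

lemma le_ncard_iff_exists_injective [Finite α] {S : Set α} {k : ℕ} :
    k ≤ S.ncard ↔ ∃ u : Fin k → α, Injective u ∧ ∀ i, u i ∈ S := by
  rw [← Nat.card_coe_set_eq]
  constructor
  · intro h
    obtain ⟨e⟩ := nonempty_embedding_of_natCard_le (α := Fin k) (β := S) (by simpa using h)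
    exact ⟨fun i => (e i : α), Subtype.val_injective.comp e.injective, fun i => (e i).2⟩
  · rintro ⟨u, hu, huS⟩
    simpa using Nat.card_le_card_of_injective (fun i => (⟨u i, huS i⟩ : S))
      fun i j h => hu (congrArg Subtype.val h)

theorem forall_exists_injective_iff_min_ncard_le [Finite α] [Finite β]
    (p : α → γ) (p' : β → γ) (A : Set α) (B : Set β) (c : ℕ) :
    (∀ k ≤ c, ∀ u : Fin k → α, Injective u → (∀ i, u i ∈ A) →
      ∃ u' : Fin k → β, Injective u' ∧ (∀ i, u' i ∈ B) ∧ ∀ i, p (u i) = p' (u' i)) ↔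
    ∀ g, min (A ∩ p ⁻¹' {g}).ncard c ≤ (B ∩ p' ⁻¹' {g}).ncard := by
  constructor
  · intro h g
    obtain ⟨u, hu, huA⟩ :=
      le_ncard_iff_exists_injective.mp (min_le_left (A ∩ p ⁻¹' {g}).ncard c)
    obtain ⟨u', hu', hu'B, hpu⟩ :=
      h _ (min_le_right _ c) u hu fun i => (huA i).1
    exact le_ncard_iff_exists_injective.mpr
      ⟨u', hu', fun i => ⟨hu'B i, (hpu i).symm.trans (huA i).2⟩⟩
  · intro h k hk u hu huA
    have hfiber (g : γ) :
        Nat.card {i // p (u i) = g} ≤ Nat.card (B ∩ p' ⁻¹' {g} : Set β) := by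
      rw [Nat.card_coe_set_eq]
      refine le_trans (le_min ?_ ?_) (h g)
      · rw [← Nat.card_coe_set_eq]
        exact Nat.card_le_card_of_injective (fun i => ⟨u i, huA i, i.2⟩)
          fun i j hij => Subtype.ext (hu (congrArg Subtype.val hij))
      · exact (Finite.card_subtype_le _).trans (by simpa using hk)
    -- `u` is matched into `B` class by class, each fiber of `p ∘ u` separately.
    have e := fun g => (nonempty_embedding_of_natCard_le (hfiber g)).some
    set u' : Fin k → β := fun i => e (p (u i)) ⟨i, rfl⟩
    have hu'_eq (i : Fin k) (g : γ) (hg : p (u i) = g) : u' i = e g ⟨i, hg⟩ := by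
      subst hg; rfl
    have hpu' (i : Fin k) : p' (u' i) = p (u i) := (e _ _).2.2
    refine ⟨u', fun i j hij => ?_, fun i => (e _ _).2.1, fun i => (hpu' i).symm⟩
    have hg : p (u j) = p (u i) := by rw [← hpu', ← hpu', hij]
    rw [hu'_eq j _ hg] at hij
    exact congrArg Subtype.val ((e _).injective (Subtype.ext hij))

theorem forall_min_ncard_eq_iff [Finite β] {S₁ : Set α} {S₂ : Set β} {κ₁ : α → γ}
    {κ₂ : β → γ} {cap : ℕ} (hcap : 1 ≤ cap) :
    (∀ g, min (S₁ ∩ κ₁ ⁻¹' {g}).ncard cap = min (S₂ ∩ κ₂ ⁻¹' {g}).ncard cap) ↔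
      (∀ x ∈ S₁, min (S₁ ∩ κ₁ ⁻¹' {κ₁ x}).ncard cap = min (S₂ ∩ κ₂ ⁻¹' {κ₁ x}).ncard cap) ∧
        ∀ y ∈ S₂, ∃ x ∈ S₁, κ₁ x = κ₂ y := by
  constructor
  · refine fun h => ⟨fun x _ => h (κ₁ x), fun y hy => ?_⟩
    have hpos : 0 < (S₂ ∩ κ₂ ⁻¹' {κ₂ y}).ncard := (Set.ncard_pos).mpr ⟨y, hy, rfl⟩
    have hy_count := h (κ₂ y)
    obtain ⟨x, hx, hxy⟩ := Set.nonempty_of_ncard_ne_zero (s := S₁ ∩ κ₁ ⁻¹' {κ₂ y}) (by omega)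
    exact ⟨x, hx, hxy⟩
  · rintro ⟨hcount, hcover⟩ g
    by_cases hg : ∃ x ∈ S₁, κ₁ x = g
    · obtain ⟨x, hx, rfl⟩ := hg
      exact hcount x hx
    · have h₁ : S₁ ∩ κ₁ ⁻¹' {g} = ∅ :=
        Set.eq_empty_of_forall_notMem fun x ⟨hx, hxg⟩ => hg ⟨x, hx, hxg⟩
      have h₂ : S₂ ∩ κ₂ ⁻¹' {g} = ∅ := Set.eq_empty_of_forall_notMem fun y ⟨hy, hyg⟩ => by
        obtain ⟨x, hx, hxy⟩ := hcover y hy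
        exact hg ⟨x, hx, hxy.trans hyg⟩
      rw [h₁, h₂, Set.ncard_empty, Set.ncard_empty]

end Counting

namespace GML

variable {d : ℕ} {α γ : Type*}

noncomputable def bigAnd (s : Finset α) (φ : α → GML d) : GML d :=
  (s.toList.map φ).foldr .and .top

noncomputable def bigOr (s : Finset α) (φ : α → GML d) : GML d :=
  .not (bigAnd s fun x => .not (φ x))

noncomputable def features (b : Fin d → Bool) : GML d :=
  bigAnd Finset.univ fun i => if b i then .prop i else .not (.prop i)

def capped (M : ℕ → GML d) (n cap : ℕ) : GML d :=
  if n < cap then (M n).and (.not (M (n + 1))) else M cap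

noncomputable def countsAgree (M : ℕ → GML d → GML d) (cap : ℕ) (S : Finset α) (κ : α → γ)
    (χ : α → GML d) : GML d :=
  (bigAnd S fun x => capped (fun k => M k (χ x)) ((S : Set α) ∩ κ ⁻¹' {κ x}).ncard cap).and
    (.not (M 1 (.not (bigOr S χ))))

end GML

section Satisfaction

variable {d : ℕ} {α γ : Type*} {G : FGraph d} {v : G.V}

lemma sat_foldr_and {l : List (GML d)} :
    GMLSat G (l.foldr .and .top) v ↔ ∀ φ ∈ l, GMLSat G φ v := by
  induction l with
  | nil => simp [GMLSat]
  | cons φ l ih => simp [GMLSat, ih]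

lemma sat_bigAnd {s : Finset α} {φ : α → GML d} :
    GMLSat G (GML.bigAnd s φ) v ↔ ∀ x ∈ s, GMLSat G (φ x) v := by
  simp [GML.bigAnd, sat_foldr_and]

lemma sat_bigOr {s : Finset α} {φ : α → GML d} :
    GMLSat G (GML.bigOr s φ) v ↔ ∃ x ∈ s, GMLSat G (φ x) v := by
  simp [GML.bigOr, GMLSat, sat_bigAnd]

lemma sat_features {b : Fin d → Bool} : GMLSat G (GML.features b) v ↔ G.f v = b := by
  rw [GML.features, sat_bigAnd, funext_iff]
  refine forall_congr' fun i => ?_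
  cases b i <;> simp [GMLSat]

lemma sat_capped {M : ℕ → GML d} {N : ℕ} (hM : ∀ k, GMLSat G (M k) v ↔ k ≤ N) (n cap : ℕ) :
    GMLSat G (GML.capped M n cap) v ↔ min N cap = min n cap := by
  unfold GML.capped
  split_ifs <;> simp only [GMLSat, hM] <;> omega

theorem sat_countsAgree {M : ℕ → GML d → GML d} {cap : ℕ} (hcap : 1 ≤ cap) {S : Finset α}
    {κ : α → γ} {χ : α → GML d} {S₂ : Set G.V} {κ₂ : G.V → γ}
    (hM : ∀ k φ, GMLSat G (M k φ) v ↔ k ≤ (S₂ ∩ {u | GMLSat G φ u}).ncard)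
    (hχ : ∀ x u, GMLSat G (χ x) u ↔ κ x = κ₂ u) :
    GMLSat G (GML.countsAgree M cap S κ χ) v ↔
      ∀ g, min ((S : Set α) ∩ κ ⁻¹' {g}).ncard cap = min (S₂ ∩ κ₂ ⁻¹' {g}).ncard cap := by
  have hclass (x : α) : S₂ ∩ {u | GMLSat G (χ x) u} = S₂ ∩ κ₂ ⁻¹' {κ x} := by
    ext u
    simp [hχ, eq_comm]
  rw [forall_min_ncard_eq_iff hcap, GML.countsAgree, GMLSat, sat_bigAnd, GMLSat, hM,
    Nat.one_le_iff_ne_zero, not_not, Set.ncard_eq_zero]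
  refine and_congr (forall₂_congr fun x _ => ?_) ?_
  · rw [sat_capped (fun k => by rw [hM, hclass]), eq_comm]
  · simp [Set.eq_empty_iff_forall_notMem, GMLSat, sat_bigOr, hχ]

end Satisfaction

section Bisimilarity

variable {d c : ℕ}

lemma bisim_refl : ∀ {L : ℕ} {G : FGraph d} (v : G.V), bisim d c L G G v v
  | 0, _, _ => rfl
  | _ + 1, _, _ => ⟨rfl, fun _ _ u hu hE => ⟨u, hu, hE, fun i => bisim_refl (u i)⟩,
      fun _ _ u hu hE => ⟨u, hu, hE, fun i => bisim_refl (u i)⟩⟩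

lemma bisim_symm : ∀ {L : ℕ} {G₁ G₂ : FGraph d} {v₁ : G₁.V} {v₂ : G₂.V},
    bisim d c L G₁ G₂ v₁ v₂ → bisim d c L G₂ G₁ v₂ v₁
  | 0, _, _, _, _, h => h.symm
  | _ + 1, _, _, _, _, ⟨hf, hforth, hback⟩ =>
    ⟨hf.symm,
      fun k hk u hu hE => let ⟨u', hu', hE', hb⟩ := hback k hk u hu hE
        ⟨u', hu', hE', fun i => bisim_symm (hb i)⟩,
      fun k hk u hu hE => let ⟨u', hu', hE', hb⟩ := hforth k hk u hu hE
        ⟨u', hu', hE', fun i => bisim_symm (hb i)⟩⟩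

lemma bisim_trans : ∀ {L : ℕ} {G₁ G₂ G₃ : FGraph d} {v₁ : G₁.V} {v₂ : G₂.V} {v₃ : G₃.V},
    bisim d c L G₁ G₂ v₁ v₂ → bisim d c L G₂ G₃ v₂ v₃ → bisim d c L G₁ G₃ v₁ v₃
  | 0, _, _, _, _, _, _, h, h' => h.trans h'
  | _ + 1, _, _, _, _, _, _, ⟨hf, hforth, hback⟩, ⟨hf', hforth', hback'⟩ =>
    ⟨hf.trans hf',
      fun k hk u hu hE =>
        let ⟨u', hu', hE', hb⟩ := hforth k hk u hu hE
        let ⟨u'', hu'', hE'', hb'⟩ := hforth' k hk u' hu' hE'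
        ⟨u'', hu'', hE'', fun i => bisim_trans (hb i) (hb' i)⟩,
      fun k hk u hu hE =>
        let ⟨u', hu', hE', hb'⟩ := hback' k hk u hu hE
        let ⟨u'', hu'', hE'', hb⟩ := hback k hk u' hu' hE'
        ⟨u'', hu'', hE'', fun i => bisim_trans (hb i) (hb' i)⟩⟩

lemma bisim_comm {L : ℕ} {G₁ G₂ : FGraph d} {v₁ : G₁.V} {v₂ : G₂.V} :
    bisim d c L G₁ G₂ v₁ v₂ ↔ bisim d c L G₂ G₁ v₂ v₁ :=
  ⟨bisim_symm, bisim_symm⟩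

variable (d c) in
/-- Representing a `∼^{L,c}`-class by the predicate of all pointed graphs in it lets vertices
of different graphs be compared by equality. -/
def bisimClass (L : ℕ) (G : FGraph d) (v : G.V) : (H : FGraph d) → H.V → Prop :=
  fun H w => bisim d c L G H v w

lemma bisimClass_eq_iff {L : ℕ} {G₁ G₂ : FGraph d} {v₁ : G₁.V} {v₂ : G₂.V} :
    bisimClass d c L G₁ v₁ = bisimClass d c L G₂ v₂ ↔ bisim d c L G₁ G₂ v₁ v₂ := by
  refine ⟨fun h => ?_, fun h => funext fun H => funext fun w => propext ?_⟩
  · rw [show bisim d c L G₁ G₂ v₁ v₂ = bisim d c L G₂ G₂ v₂ v₂ from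
      congrFun (congrFun h G₂) v₂]
    exact bisim_refl v₂
  · exact ⟨bisim_trans (bisim_symm h), bisim_trans h⟩

theorem bisim_succ_iff {L : ℕ} {G₁ G₂ : FGraph d} {v₁ : G₁.V} {v₂ : G₂.V} :
    bisim d c (L + 1) G₁ G₂ v₁ v₂ ↔ G₁.f v₁ = G₂.f v₂ ∧ ∀ g,
      min ({u | G₁.E v₁ u} ∩ bisimClass d c L G₁ ⁻¹' {g}).ncard c =
        min ({u | G₂.E v₂ u} ∩ bisimClass d c L G₂ ⁻¹' {g}).ncard c := by
  have hforth := forall_exists_injective_iff_min_ncard_le (bisimClass d c L G₁)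
    (bisimClass d c L G₂) {u | G₁.E v₁ u} {u | G₂.E v₂ u} c
  have hback := forall_exists_injective_iff_min_ncard_le (bisimClass d c L G₂)
    (bisimClass d c L G₁) {u | G₂.E v₂ u} {u | G₁.E v₁ u} c
  simp only [bisimClass_eq_iff, Set.mem_ofPred_eq] at hforth hback
  simp only [bisim_comm (G₁ := G₂)] at hback
  rw [bisim, hforth, hback, ← forall_and]
  refine and_congr_right fun _ => forall_congr' fun g => ?_
  omega

end Bisimilarity

section CharacteristicFormula

variable {d c : ℕ}

lemma setOf_bisim_eq_preimage {L : ℕ} {G H : FGraph d} (v : G.V) :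
    {x : H.V | bisim d c L H G x v} = bisimClass d c L H ⁻¹' {bisimClass d c L G v} := by
  ext x
  exact bisimClass_eq_iff.symm

theorem bisimQ_iff {L q : ℕ} {G₁ G₂ : FGraph d} {v₁ : G₁.V} {v₂ : G₂.V} :
    bisimQ d c L q G₁ G₂ v₁ v₂ ↔ bisim d c L G₁ G₂ v₁ v₂ ∧ ∀ g,
      min (bisimClass d c L G₁ ⁻¹' {g}).ncard q = min (bisimClass d c L G₂ ⁻¹' {g}).ncard q := by
  simp only [bisimQ, setOf_bisim_eq_preimage]
  refine and_congr_right fun _ => ⟨fun ⟨h₁, h₂⟩ g => ?_, fun h => ⟨fun _ => h _, fun _ => h _⟩⟩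
  by_cases hg₁ : ∃ u, bisimClass d c L G₁ u = g
  · obtain ⟨u, rfl⟩ := hg₁
    exact h₁ u
  by_cases hg₂ : ∃ u, bisimClass d c L G₂ u = g
  · obtain ⟨u, rfl⟩ := hg₂
    exact h₂ u
  rw [Set.preimage_singleton_eq_empty.mpr hg₁, Set.preimage_singleton_eq_empty.mpr hg₂,
    Set.ncard_empty, Set.ncard_empty]

variable (c) in
noncomputable def charFormula (G : FGraph d) : ℕ → G.V → GML d
  | 0, w => .features (G.f w)
  | L + 1, w => (GML.features (G.f w)).and <|
      .countsAgree .dia c (Set.toFinite {u | G.E w u}).toFinset (bisimClass d c L G)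
        (charFormula G L)

theorem sat_charFormula (hc : 1 ≤ c) {G₁ G₂ : FGraph d} :
    ∀ (L : ℕ) (w : G₁.V) (v : G₂.V),
      GMLSat G₂ (charFormula c G₁ L w) v ↔ bisim d c L G₁ G₂ w v
  | 0, _, _ => sat_features.trans eq_comm
  | L + 1, w, v => by
    rw [charFormula, GMLSat, sat_features, sat_countsAgree hc (S₂ := {u | G₂.E v u})
      (fun _ _ => Iff.rfl) fun x u => (sat_charFormula hc L x u).trans bisimClass_eq_iff.symm,
      Set.Finite.coe_toFinset, bisim_succ_iff, eq_comm]

end CharacteristicFormula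

/-- Every pointed `d`-featured graph has a `GML^∃`
characteristic formula for `∼^{L,c,q}_∃`: a formula satisfied by exactly the
pointed graphs `∼^{L,c,q}_∃`-bisimilar to it. -/
theorem stmt13 (d c L q : ℕ) (hc : 1 ≤ c) (hq : 1 ≤ q)
    (G₁ : FGraph d) (v₁ : G₁.V) :
    ∃ γ : GML d, ∀ (G₂ : FGraph d) (v₂ : G₂.V),
      GMLSat G₂ γ v₂ ↔ bisimQ d c L q G₁ G₂ v₁ v₂ := by
  refine ⟨(charFormula c G₁ L v₁).and
    (.countsAgree .ex q Finset.univ (bisimClass d c L G₁) (charFormula c G₁ L)), fun G₂ v₂ => ?_⟩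
  rw [GMLSat, sat_charFormula hc, sat_countsAgree hq (S₂ := Set.univ)
    (fun _ _ => by rw [Set.univ_inter]; rfl)
    fun x u => (sat_charFormula hc L x u).trans bisimClass_eq_iff.symm, bisimQ_iff,
    Finset.coe_univ]
  simp only [Set.univ_inter]
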